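/- Let Γ be a countable discrete group and f ∈ ℤΓ invertible in ℓ¹(Γ) with inverse w_f^Δ = f⁻¹, and let ξ = η ∘ ρ_{w_f^Δ} : ℓ∞(Γ,ℤ) → X_f. Then for every x ∈ X_f there exists v ∈ ℓ∞(Γ,ℤ) with ξ(v) = x and ‖v‖_∞ ≤ ‖f‖₁/2. -/

import Mathlib

open scoped BigOperators symmDiff Pointwise

noncomputable section

/-- The additive circle `𝕋 = ℝ/ℤ`. -/
abbrev Torus : Type := AddCircle (1 : ℝ)

section GroupDefs

variable {Γ : Type*} [Group Γ]

/-- For `f ∈ ℤΓ`, the map `ρ_f : 𝕋^Γ → 𝕋^Γ`, `(ρ_f x)_{γ'} = Σ_γ f_γ • x_{γ'γ}`. -/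
def rhoT (f : Γ →₀ ℤ) (x : Γ → Torus) : Γ → Torus :=
  fun γ' => f.sum fun γ c => c • x (γ' * γ)

/-- The compact abelian group `X_f = ker ρ_f ⊆ 𝕋^Γ` (as a subset). -/
def XSet (f : Γ →₀ ℤ) : Set (Γ → Torus) := {x | rhoT f x = 0}

/-- The left shift `(λ^γ x)_{γ'} = x_{γ⁻¹ γ'}` on `𝕋^Γ`; restricted to `X_f` this is `α_f^γ`. -/
def lsh (γ : Γ) (x : Γ → Torus) : Γ → Torus := fun γ' => x (γ⁻¹ * γ')

/-- The left shift `(λ^γ w)_{γ'} = w_{γ⁻¹ γ'}` on real-valued functions. -/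
def lshR (γ : Γ) (w : Γ → ℝ) : Γ → ℝ := fun γ' => w (γ⁻¹ * γ')

/-- Expansiveness of the `Γ`-action `α_f` on `X_f`: there is an open neighbourhood `U`
of `0` such that the only point of `X_f` all of whose translates stay in `U` is `0`
(equivalently, `⋂_γ α_f^γ (U ∩ X_f) = {0}`). -/
def ExpansiveAction (f : Γ →₀ ℤ) : Prop :=
  ∃ U : Set (Γ → Torus), IsOpen U ∧ {x | x ∈ XSet f ∧ ∀ γ : Γ, lsh γ x ∈ U} = {0}

/-- `w ∈ ℓ∞(Γ)`: boundedness of a real-valued function. -/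
def Bdd (w : Γ → ℝ) : Prop := ∃ C : ℝ, ∀ γ : Γ, |w γ| ≤ C

/-- `w ∈ ℓ∞(Γ,ℤ)`: all values are integers. -/
def IntValued (w : Γ → ℝ) : Prop := ∀ γ : Γ, ∃ k : ℤ, w γ = (k : ℝ)

/-- For `f ∈ ℤΓ`, the operator `ρ_f` on `ℓ∞(Γ)`: `(ρ_f w)_γ = Σ_{γ'} w_{γγ'} f_{γ'}`. -/
def rhoInf (f : Γ →₀ ℤ) (w : Γ → ℝ) : Γ → ℝ :=
  fun γ => f.sum fun γ' c => (c : ℝ) * w (γ * γ')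

/-- For `h ∈ ℓ¹(Γ)`, the operator `ρ_h` on `ℓ∞(Γ)`: `(ρ_h w)_γ = Σ_{γ'} w_{γγ'} h_{γ'}`. -/
def rhoL1 (h : Γ → ℝ) (w : Γ → ℝ) : Γ → ℝ :=
  fun γ => ∑' γ' : Γ, w (γ * γ') * h γ'

/-- Convolution on `ℓ¹(Γ)`: `(g·h)_γ = Σ_{γ'} g_{γ'} h_{γ'⁻¹γ}`. -/
def conv (g h : Γ → ℝ) : Γ → ℝ := fun γ => ∑' γ' : Γ, g γ' * h (γ'⁻¹ * γ)

/-- Convolution on `ℓ¹(Γ,ℂ)`. -/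
def convC (g h : Γ → ℂ) : Γ → ℂ := fun γ => ∑' γ' : Γ, g γ' * h (γ'⁻¹ * γ)

open Classical in
/-- The unit `δ₁` of the convolution algebra `ℓ¹(Γ)`. -/
def deltaOne : Γ → ℝ := fun γ => if γ = 1 then 1 else 0

open Classical in
/-- The unit `δ₁` of `ℓ¹(Γ,ℂ)`. -/
def deltaOneC : Γ → ℂ := fun γ => if γ = 1 then 1 else 0

/-- `g` is a two-sided convolution inverse of `f` in `ℓ¹(Γ)`. -/
def IsL1Inverse (f g : Γ → ℝ) : Prop :=
  Summable g ∧ conv f g = deltaOne ∧ conv g f = deltaOne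

/-- View `f ∈ ℤΓ` as an element of `ℓ¹(Γ)`. -/
def fR (f : Γ →₀ ℤ) : Γ → ℝ := fun γ => (f γ : ℝ)

/-- View `f ∈ ℤΓ` as an element of `ℓ¹(Γ,ℂ)`. -/
def fCC (f : Γ →₀ ℤ) : Γ → ℂ := fun γ => (f γ : ℂ)

/-- The `ℓ¹`-norm `‖f‖₁` of `f ∈ ℤΓ`. -/
def finsuppL1 (f : Γ →₀ ℤ) : ℝ := f.sum fun _ c => |(c : ℝ)|

/-- The `ℓ¹`-norm of `h ∈ ℓ¹(Γ,ℂ)`. -/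
def l1normC (h : Γ → ℂ) : ℝ := ∑' γ : Γ, ‖h γ‖

/-- Coordinatewise reduction mod 1, `η : ℓ∞(Γ) → 𝕋^Γ`. -/
def etaT (w : Γ → ℝ) : Γ → Torus := fun γ => ((w γ : ℝ) : Torus)

/-- The map `ξ = η ∘ ρ_{w}` for `w ∈ ℓ¹(Γ)`. -/
def xiMap (w : Γ → ℝ) (v : Γ → ℝ) : Γ → Torus := etaT (rhoL1 w v)

/-- A point `x ∈ 𝕋^Γ` is homoclinic if `λ^γ x → 0` along the cofinite filter on `Γ`. -/
def IsHomoclinic (x : Γ → Torus) : Prop :=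
  Filter.Tendsto (fun γ : Γ => lsh γ x) Filter.cofinite (nhds 0)

/-- The set of `Γ'`-fixed points of `α_f` in `X_f`. -/
def FixSet (f : Γ →₀ ℤ) (Γ' : Subgroup Γ) : Set (Γ → Torus) :=
  {x | x ∈ XSet f ∧ ∀ γ ∈ Γ', lsh γ x = x}

/-- Left `(K,ε)`-invariance of a finite set `Q ⊆ Γ`. -/
def LeftInv [DecidableEq Γ] (K : Finset Γ) (ε : ℝ) (Q : Finset Γ) : Prop :=
  ∑ γ ∈ K, (((Q.image fun q => γ * q) ∆ Q).card : ℝ) / (Q.card : ℝ) < ε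

/-- Right `(K,ε)`-invariance of a finite set `Q ⊆ Γ`. -/
def RightInv [DecidableEq Γ] (K : Finset Γ) (ε : ℝ) (Q : Finset Γ) : Prop :=
  ∑ γ ∈ K, (((Q.image fun q => q * γ) ∆ Q).card : ℝ) / (Q.card : ℝ) < ε

/-- Amenability: existence of a left Følner sequence. -/
def Amenable (Γ : Type*) [Group Γ] [DecidableEq Γ] : Prop :=
  ∃ Q : ℕ → Finset Γ, (∀ n, (Q n).Nonempty) ∧
    ∀ (K : Finset Γ) (ε : ℝ), 0 < ε → ∃ N : ℕ, ∀ n ≥ N, LeftInv K ε (Q n)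

/-- Residual finiteness: there is a sequence of finite-index normal subgroups with
trivial intersection. -/
def ResFinite (Γ : Type*) [Group Γ] : Prop :=
  ∃ N : ℕ → Subgroup Γ, (∀ n, (N n).Normal ∧ (N n).FiniteIndex) ∧
    ∀ γ : Γ, (∀ n, γ ∈ N n) → γ = 1

/-- `Q` is a fundamental domain for the coset space `Γ/Γ'`:
`{γQ : γ ∈ Γ'}` is a partition of `Γ`. -/
def IsFundDomain (Γ' : Subgroup Γ) (Q : Finset Γ) : Prop :=
  ∀ x : Γ, ∃! p : Γ × Γ, p.1 ∈ Γ' ∧ p.2 ∈ Q ∧ p.1 * p.2 = x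

/-- `lim_n Γ_n = {1}`: for every finite `K ⊆ Γ` eventually `Γ_n ∩ K⁻¹K = {1}`. -/
def LimTriv (N : ℕ → Subgroup Γ) : Prop :=
  ∀ K : Finset Γ, ∃ M : ℕ, ∀ n ≥ M, ∀ γ ∈ N n, (∃ a ∈ K, ∃ b ∈ K, γ = a⁻¹ * b) → γ = 1

/-- The word ball `B_F(n)` of radius `n` with respect to a generating set `F`. -/
def BallF (F : Finset Γ) (n : ℕ) : Set Γ :=
  {γ | ∃ l : List Γ, l.length ≤ n ∧ (∀ a ∈ l, a ∈ F) ∧ l.prod = γ}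

end GroupDefs

/-- The Hilbert space `ℓ²(Γ,ℂ)`. -/
abbrev H2 (Γ : Type*) : Type _ := lp (fun _ : Γ => ℂ) 2

section Hilbert

variable {Γ : Type*} [Group Γ]

open Classical in
/-- The standard basis vector `δ₁ ∈ ℓ²(Γ,ℂ)`. -/
def deltaL2 : H2 Γ := lp.single 2 (1 : Γ) (1 : ℂ)

/-- `A` is the right-convolution operator `ρ_f` on `ℓ²(Γ,ℂ)`,
`(ρ_f w)_γ = Σ_{γ'} w_{γγ'} f_{γ'}`. -/
def IsRho (f : Γ → ℂ) (A : H2 Γ →L[ℂ] H2 Γ) : Prop :=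
  ∀ (w : H2 Γ) (γ : Γ), (A w : Γ → ℂ) γ = ∑' γ' : Γ, (w : Γ → ℂ) (γ * γ') * f γ'

attribute [local instance] Algebra.complexToReal in
/-- The von Neumann trace of `log (A A*)`, i.e. `tr_{NΓ}(log (A A*)) = (log(AA*) δ₁)(1)`,
where `log` is given by the continuous functional calculus. -/
def trLogAAstar (A : H2 Γ →L[ℂ] H2 Γ) : ℝ :=
  (((cfc Real.log (A * star A)) deltaL2 : Γ → ℂ) (1 : Γ)).re

/-- The Fuglede–Kadison determinant `det_{NΓ} A = exp(½ tr(log (A A*)))`. -/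
def detFK (A : H2 Γ →L[ℂ] H2 Γ) : ℝ := Real.exp (2⁻¹ * trLogAAstar A)

open Classical in
/-- `f^{(n)} : Γ/Γ_n → ℂ`, integration along the fibres: `f^{(n)}(δ) = Σ_{γ ∈ δ} f_γ`. -/
def fQuot (f : Γ → ℂ) (H : Subgroup Γ) : (Γ ⧸ H) → ℂ :=
  fun δ => ∑' γ : Γ, if (QuotientGroup.mk γ : Γ ⧸ H) = δ then f γ else 0

open Classical in
/-- The indicator of the identity coset in `ℓ²(Γ/Γ_n, ℂ)`. -/
def deltaQuot (H : Subgroup Γ) : (Γ ⧸ H) → ℂ :=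
  fun δ => if δ = (QuotientGroup.mk (1 : Γ) : Γ ⧸ H) then 1 else 0

end Hilbert

/-! Lift `x ∈ X_f` to `u : Γ → ℝ` with `|u γ| ≤ 1/2`. Then `v = ρ_f u` reduces mod 1 to
`ρ_f x = 0`, so it is integer-valued, and `‖v‖_∞ ≤ ‖f‖₁ / 2`. Finally `ρ_w ρ_f = ρ_{w·f} = ρ_{δ₁}`
is the identity on `ℓ∞(Γ)`, so `ξ(v) = η(u) = x`. -/

lemma summable_mul_of_abs_le {ι : Type*} {w u : ι → ℝ} (hw : Summable w) {C : ℝ}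
    (hu : ∀ i, |u i| ≤ C) : Summable fun i => u i * w i :=
  hw.abs.mul_left C |>.of_norm_bounded fun i => by
    rw [Real.norm_eq_abs, abs_mul]
    exact mul_le_mul_of_nonneg_right (hu i) (abs_nonneg _)

lemma exists_etaT_eq_of_abs_le_half {Γ : Type*} (x : Γ → Torus) :
    ∃ u : Γ → ℝ, etaT u = x ∧ ∀ γ, |u γ| ≤ 1 / 2 := by
  refine ⟨fun γ => AddCircle.equivIco 1 (-(1 / 2)) (x γ), ?_, fun γ => ?_⟩
  · funext γ
    exact (AddCircle.equivIco 1 (-(1 / 2))).symm_apply_apply (x γ)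
  · obtain ⟨h₁, h₂⟩ := (AddCircle.equivIco 1 (-(1 / 2)) (x γ)).2
    rw [abs_le]
    constructor <;> linarith

lemma intValued_of_etaT_eq_zero {Γ : Type*} {v : Γ → ℝ} (hv : etaT v = 0) : IntValued v := by
  intro γ
  obtain ⟨k, hk⟩ := (AddCircle.coe_eq_zero_iff (1 : ℝ)).mp (congrFun hv γ)
  exact ⟨k, by simpa using hk.symm⟩

section Convolution

variable {Γ : Type*} [Group Γ]

lemma rhoInf_apply (f : Γ →₀ ℤ) (u : Γ → ℝ) (γ : Γ) :
    rhoInf f u γ = ∑ g ∈ f.support, (f g : ℝ) * u (γ * g) := rfl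

lemma abs_rhoInf_le (f : Γ →₀ ℤ) {u : Γ → ℝ} {C : ℝ} (hu : ∀ γ, |u γ| ≤ C) (γ : Γ) :
    |rhoInf f u γ| ≤ finsuppL1 f * C := by
  rw [rhoInf_apply, finsuppL1, Finsupp.sum, Finset.sum_mul]
  refine (Finset.abs_sum_le_sum_abs _ _).trans (Finset.sum_le_sum fun g _ => ?_)
  rw [abs_mul]
  exact mul_le_mul_of_nonneg_left (hu _) (abs_nonneg _)

lemma etaT_rhoInf (f : Γ →₀ ℤ) (u : Γ → ℝ) : etaT (rhoInf f u) = rhoT f (etaT u) := by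
  funext γ
  change QuotientAddGroup.mk' _ (rhoInf f u γ) = _
  rw [rhoInf_apply, map_sum, rhoT, Finsupp.sum]
  refine Finset.sum_congr rfl fun g _ => ?_
  rw [← zsmul_eq_mul, map_zsmul]
  rfl

lemma conv_fR_apply (w : Γ → ℝ) (f : Γ →₀ ℤ) (δ : Γ) :
    conv w (fR f) δ = ∑ g ∈ f.support, (f g : ℝ) * w (δ * g⁻¹) := by
  rw [conv, ← (Equiv.mulLeft δ).tsum_eq, ← (Equiv.inv Γ).tsum_eq]
  refine (tsum_eq_sum fun g hg => ?_).trans (Finset.sum_congr rfl fun g _ => ?_)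
  · simp [fR, Finsupp.notMem_support_iff.mp hg]
  · simp [fR, mul_comm]

lemma rhoL1_comp_mul_right (w u : Γ → ℝ) (g γ : Γ) :
    rhoL1 w (fun η => u (η * g)) γ = ∑' δ, u (γ * δ) * w (δ * g⁻¹) := by
  rw [rhoL1, ← (Equiv.mulRight g⁻¹).tsum_eq]
  simp [mul_assoc]

lemma rhoL1_rhoInf {w u : Γ → ℝ} (hw : Summable w) {C : ℝ} (hu : ∀ γ, |u γ| ≤ C)
    (f : Γ →₀ ℤ) : rhoL1 w (rhoInf f u) = rhoL1 (conv w (fR f)) u := by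
  funext γ
  have hw' (g : Γ) : Summable fun δ => w (δ * g⁻¹) := (Equiv.mulRight g⁻¹).summable_iff.mpr hw
  calc rhoL1 w (rhoInf f u) γ
      = ∑' γ', ∑ g ∈ f.support, (f g : ℝ) * (u (γ * γ' * g) * w γ') := by
        simp only [rhoL1, rhoInf_apply, Finset.sum_mul, mul_assoc]
    _ = ∑ g ∈ f.support, (f g : ℝ) * rhoL1 w (fun η => u (η * g)) γ := by
        refine Summable.tsum_finsetSum (fun g _ => ?_) |>.trans
          (Finset.sum_congr rfl fun g _ => tsum_mul_left)
        exact (summable_mul_of_abs_le hw fun _ => hu _).mul_left _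
    _ = ∑' δ, ∑ g ∈ f.support, (f g : ℝ) * (u (γ * δ) * w (δ * g⁻¹)) := by
        simp only [rhoL1_comp_mul_right, ← tsum_mul_left]
        exact (Summable.tsum_finsetSum fun g _ =>
          ((summable_mul_of_abs_le (hw' g) fun _ => hu _).mul_left _)).symm
    _ = rhoL1 (conv w (fR f)) u γ := by
        simp only [rhoL1, conv_fR_apply, Finset.mul_sum]
        exact tsum_congr fun δ => Finset.sum_congr rfl fun g _ => by ring

lemma rhoL1_deltaOne (u : Γ → ℝ) : rhoL1 deltaOne u = u := by
  funext γ
  rw [rhoL1, tsum_eq_single 1 fun δ hδ => by simp [deltaOne, hδ]]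
  simp [deltaOne]

end Convolution

theorem statement4_general {Γ : Type*} [Group Γ] (f : Γ →₀ ℤ) (w : Γ → ℝ)
    (hw : IsL1Inverse (fR f) w) :
    ∀ x ∈ XSet f, ∃ v : Γ → ℝ, Bdd v ∧ IntValued v ∧ xiMap w v = x ∧
      ∀ γ : Γ, |v γ| ≤ finsuppL1 f / 2 := by
  obtain ⟨hw_summable, -, hwf⟩ := hw
  intro x hx
  obtain ⟨u, rfl, hu⟩ := exists_etaT_eq_of_abs_le_half x
  have hbound (γ : Γ) : |rhoInf f u γ| ≤ finsuppL1 f / 2 :=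
    (abs_rhoInf_le f hu γ).trans_eq (by ring)
  refine ⟨rhoInf f u, ⟨_, hbound⟩, intValued_of_etaT_eq_zero ?_, ?_, hbound⟩
  · rw [etaT_rhoInf]
    exact hx
  · rw [xiMap, rhoL1_rhoInf hw_summable hu, hwf, rhoL1_deltaOne]

/-- Let `Γ` be a countable discrete group and `f ∈ ℤΓ` invertible in
`ℓ¹(Γ)` with inverse `w = w_f^Δ`, and `ξ = η ∘ ρ_w : ℓ∞(Γ,ℤ) → X_f`. Then for every
`x ∈ X_f` there exists `v ∈ ℓ∞(Γ,ℤ)` with `ξ(v) = x` and `‖v‖_∞ ≤ ‖f‖₁ / 2`. -/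
theorem statement4 {Γ : Type*} [Group Γ] [Countable Γ] (f : Γ →₀ ℤ) (w : Γ → ℝ)
    (hw : IsL1Inverse (fR f) w) :
    ∀ x ∈ XSet f, ∃ v : Γ → ℝ, Bdd v ∧ IntValued v ∧ xiMap w v = x ∧
      ∀ γ : Γ, |v γ| ≤ finsuppL1 f / 2 :=
  statement4_general f w hw
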